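/- For a prime Poisson ideal P of A₁ that is stable under the map f(a) = {a,h}h^{-1}, if P is nonzero then P contains a nonzero homogeneous element w_k ∈ W_k for some k ∈ ℤ. -/

import Mathlib

/- Common setup: the Poisson generalized Weyl algebra
   `A₁ = ℂ[h^{±1},x,y]/⟨xy - a(h)⟩` with Poisson bracket
   `{x,h} = hx`, `{y,h} = -hy`, `{y,x} = -a'(h)h`. -/

noncomputable section
open LaurentPolynomial

/-- `ℂ[h^{±1}]`, the ring of complex Laurent polynomials in `h = T 1`. -/
abbrev L : Type := LaurentPolynomial ℂ

/-- The formal derivative `a'` of a Laurent polynomial `a`. -/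
def lderiv (a : L) : L := Finsupp.sum (AddMonoidAlgebra.coeff a) fun n c => LaurentPolynomial.C ((n : ℂ) * c) * T (n - 1)

/-- Evaluation of a Laurent polynomial at a (nonzero) complex number `z`. -/
def leval (z : ℂ) (a : L) : ℂ := Finsupp.sum (AddMonoidAlgebra.coeff a) fun n c => c * z ^ n

/-- The Laurent polynomial `a(γ·h)`. -/
def lscale (γ : ℂ) (a : L) : L := Finsupp.sum (AddMonoidAlgebra.coeff a) fun n c => LaurentPolynomial.C (c * γ ^ n) * T n

/-- The Laurent polynomial `a(γ·h⁻¹)`. -/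
def lsubinv (γ : ℂ) (a : L) : L := Finsupp.sum (AddMonoidAlgebra.coeff a) fun n c => LaurentPolynomial.C (c * γ ^ n) * T (-n)

/-- `B₁ = ℂ[h^{±1}, x, y]` (commutative), with `x = X 0`, `y = X 1`. -/
abbrev B1 : Type := MvPolynomial (Fin 2) L

/-- The inclusion `ℂ[h^{±1}] → ℂ[h^{±1},x,y]`. -/
def ih : L →+* B1 := MvPolynomial.C

/-- `h ∈ B₁`. -/
def Bh : B1 := ih (T 1)
/-- `x ∈ B₁`. -/
def Bx : B1 := MvPolynomial.X 0
/-- `y ∈ B₁`. -/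
def By : B1 := MvPolynomial.X 1

/-- The ideal `⟨xy - a(h)⟩` of `ℂ[h^{±1},x,y]`. -/
def GWI (a : L) : Ideal B1 := Ideal.span {Bx * By - ih a}

/-- The Poisson generalized Weyl algebra `A₁ = ℂ[h^{±1},x,y]/⟨xy - a(h)⟩`, as a
commutative ℂ-algebra. -/
abbrev GW (a : L) : Type := B1 ⧸ GWI a

/-- The canonical projection `B₁ → A₁`. -/
def gp (a : L) : B1 →+* GW a := Ideal.Quotient.mk (GWI a)
/-- `h ∈ A₁`. -/
def gH (a : L) : GW a := gp a Bh
/-- `x ∈ A₁`. -/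
def gX (a : L) : GW a := gp a Bx
/-- `y ∈ A₁`. -/
def gY (a : L) : GW a := gp a By
/-- `h^i ∈ A₁`, for `i : ℤ`. -/
def gHp (a : L) (i : ℤ) : GW a := gp a (ih (T i))

/-- `β` is a Poisson bracket on the commutative ℂ-algebra `A`: ℂ-bilinear (via
linearity in the first argument together with antisymmetry), antisymmetric,
satisfying the Leibniz rule and the Jacobi identity. -/
def IsPoissonBracket {A : Type} [CommRing A] [Algebra ℂ A] (β : A → A → A) : Prop :=
  (∀ (r : ℂ) (u v w : A), β (r • u + v) w = r • β u w + β v w) ∧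
  (∀ u v : A, β u v = - β v u) ∧
  (∀ u v w : A, β (u * v) w = u * β v w + β u w * v) ∧
  (∀ u v w : A, β u (β v w) + β v (β w u) + β w (β u v) = 0)

/-- `β` is the Poisson bracket of the Poisson generalized Weyl algebra `A₁`,
determined by `{x,h} = hx`, `{y,h} = -hy`, `{y,x} = -a'(h)h`. -/
def IsGWBracket (a : L) (β : GW a → GW a → GW a) : Prop :=
  IsPoissonBracket β ∧
  β (gX a) (gH a) = gH a * gX a ∧
  β (gY a) (gH a) = -(gH a * gY a) ∧
  β (gY a) (gX a) = -(gp a (ih (lderiv a)) * gH a)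

/-- The homogeneous component `W_k` of `A₁`: `ℂ[h^{±1}]x^k` for `k > 0`,
`ℂ[h^{±1}]` for `k = 0`, and `ℂ[h^{±1}]y^{-k}` for `k < 0`; namely the ℂ-span of
the elements `h^m x^k` (resp. `h^m`, `h^m y^{-k}`) for `m ∈ ℤ`. -/
def W (a : L) (k : ℤ) : Submodule ℂ (GW a) :=
  Submodule.span ℂ {w | ∃ m : ℤ, w = gHp a m *
    (if 0 ≤ k then gX a ^ k.toNat else gY a ^ (-k).toNat)}

/-! The map `f(u) = {u,h}h⁻¹` is a ℂ-linear derivation of `A₁` with `f(h) = 0`, `f(x) = x`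
and `f(y) = -y`, so `W_k` lies in its `k`-eigenspace, and `A₁ = ∑ₖ W_k`. As `P` is `f`-stable,
`f` descends to `A₁/P`; there the images of the homogeneous components of any `p ∈ P` are
eigenvectors for distinct eigenvalues with sum zero, so by independence of eigenspaces every
component of `p` lies in `P`. Any nonzero component of a nonzero `p` will do. -/

namespace Module.End

variable {K V ι : Type*} [Field K] [AddCommGroup V] [Module K V]
  {f : Module.End K V} {p : Submodule K V}

theorem mem_of_sum_mem_of_mem_eigenspace (hp : ∀ x ∈ p, f x ∈ p) {μ : ι → K}
    (hμ : Function.Injective μ) {s : Finset ι} {v : ι → V}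
    (hv : ∀ i ∈ s, v i ∈ f.eigenspace (μ i)) (hsum : ∑ i ∈ s, v i ∈ p) :
    ∀ i ∈ s, v i ∈ p := by
  set g := p.mapQ p f hp
  have hg : ∀ i ∈ s, p.mkQ (v i) ∈ eigenspace g (μ i) := fun i hi => by
    rw [mem_eigenspace_iff, Submodule.mkQ_apply, Submodule.mapQ_apply,
      mem_eigenspace_iff.mp (hv i hi),
      Submodule.Quotient.mk_smul]
  have hzero : ∑ i ∈ s, p.mkQ (v i) = 0 := by
    rwa [← map_sum, Submodule.mkQ_apply, Submodule.Quotient.mk_eq_zero]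
  intro i hi
  rw [← Submodule.Quotient.mk_eq_zero]
  exact (iSupIndep_iff_finsetSum_eq_zero_imp_eq_zero _).mp
    ((eigenspaces_iSupIndep g).comp hμ) s _ hg hzero i hi

theorem exists_ne_zero_mem_of_mem_iSup (hp : ∀ x ∈ p, f x ∈ p) {μ : ι → K}
    (hμ : Function.Injective μ) {W : ι → Submodule K V}
    (hW : ∀ i, W i ≤ f.eigenspace (μ i))
    {x : V} (hxp : x ∈ p) (hx0 : x ≠ 0) (hxW : x ∈ ⨆ i, W i) :
    ∃ i, ∃ w ∈ W i, w ≠ 0 ∧ w ∈ p := by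
  classical
  obtain ⟨c, hcW, rfl⟩ := (Submodule.mem_iSup_iff_exists_finsupp W x).mp hxW
  obtain ⟨i, hi⟩ : c.support.Nonempty := by
    contrapose! hx0
    simp [Finsupp.support_eq_empty.mp hx0]
  exact ⟨i, c i, hcW i, Finsupp.mem_support_iff.mp hi,
    mem_of_sum_mem_of_mem_eigenspace hp hμ (fun j _ => hW j (hcW j)) hxp i hi⟩

end Module.End

namespace Derivation

variable {R A : Type*} [CommRing R] [CommRing A] [Algebra R A] (D : Derivation R A A)

theorem apply_mul_of_eq_smul {a b : A} {c d : R} (ha : D a = c • a) (hb : D b = d • b) :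
    D (a * b) = (c + d) • (a * b) := by
  rw [leibniz, ha, hb, smul_eq_mul, smul_eq_mul, add_smul, mul_smul_comm, mul_smul_comm,
    mul_comm b, add_comm]

theorem apply_pow_of_eq_smul {a : A} {c : R} (ha : D a = c • a) (n : ℕ) :
    D (a ^ n) = (n * c) • a ^ n := by
  induction n with
  | zero => simp
  | succ n ih =>
    rw [pow_succ, Nat.cast_succ, add_one_mul]
    exact D.apply_mul_of_eq_smul ih ha

theorem apply_mul_of_eq_zero {a b : A} (ha : D a = 0) (hb : D b = 0) : D (a * b) = 0 := by
  rw [leibniz, ha, hb, smul_zero, smul_zero, add_zero]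

end Derivation

theorem Submodule.mul_mem_of_forall_mem_span {R A : Type*} [CommSemiring R] [Semiring A]
    [Algebra R A] (c : A) {S : Set A} {T : Submodule R A} (h : ∀ s ∈ S, c * s ∈ T) {w : A}
    (hw : w ∈ Submodule.span R S) : c * w ∈ T :=
  (Submodule.span_le (p := T.comap (LinearMap.mulLeft R c))).mpr h hw

namespace IsPoissonBracket

variable {A : Type} [CommRing A] [Algebra ℂ A] {β : A → A → A} (hβ : IsPoissonBracket β)
include hβ

theorem map_add_left (u v w : A) : β (u + v) w = β u w + β v w := by
  simpa using hβ.1 1 u v w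

theorem map_zero_left (w : A) : β 0 w = 0 := by
  simpa using hβ.map_add_left 0 0 w

theorem map_smul_left (r : ℂ) (u w : A) : β (r • u) w = r • β u w := by
  simpa [hβ.map_zero_left] using hβ.1 r u 0 w

theorem apply_self (u : A) : β u u = 0 := by
  have h2 : (2 : ℂ) • β u u = 0 := by
    rw [two_smul]
    nth_rewrite 1 [hβ.2.1]
    exact neg_add_cancel _
  simpa using h2

def derivationLeft (z : A) : Derivation ℂ A A :=
  Derivation.mk' ⟨⟨(β · z), (hβ.map_add_left · · z)⟩, (hβ.map_smul_left · · z)⟩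
    fun u v => by simp only [LinearMap.coe_mk, AddHom.coe_mk, hβ.2.2.1, smul_eq_mul, mul_comm]

end IsPoissonBracket

namespace GW

variable {a : L}

theorem gHp_add (i j : ℤ) : gHp a (i + j) = gHp a i * gHp a j := by
  simp only [gHp, T_add, map_mul]

theorem gHp_zero : gHp a 0 = 1 := by
  simp only [gHp, T_zero, map_one]

theorem gHp_one : gHp a 1 = gH a := rfl

theorem gHp_neg_one_mul_gH : gHp a (-1) * gH a = 1 := by
  rw [← gHp_one, ← gHp_add, neg_add_cancel, gHp_zero]

theorem gX_mul_gY : gX a * gY a = gp a (ih a) := by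
  rw [gX, gY, ← map_mul]
  exact Ideal.Quotient.eq.mpr (Ideal.subset_span rfl)

theorem gp_ih_C_mul (c : ℂ) (w : GW a) : gp a (ih (C c)) * w = c • w :=
  (Algebra.smul_def c w).symm

def xyPow (a : L) (k : ℤ) : GW a := if 0 ≤ k then gX a ^ k.toNat else gY a ^ (-k).toNat

theorem gHp_mul_xyPow_mem_W (m k : ℤ) : gHp a m * xyPow a k ∈ W a k :=
  Submodule.subset_span ⟨m, rfl⟩

theorem xyPow_of_nonneg {k : ℤ} (hk : 0 ≤ k) : xyPow a k = gX a ^ k.toNat := if_pos hk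

theorem xyPow_of_nonpos {k : ℤ} (hk : k ≤ 0) : xyPow a k = gY a ^ (-k).toNat := by
  rcases hk.lt_or_eq with hk | rfl
  · exact if_neg (by omega)
  · simp [xyPow]

theorem gX_mul_xyPow_of_nonneg {k : ℤ} (hk : 0 ≤ k) : gX a * xyPow a k = xyPow a (k + 1) := by
  rw [xyPow_of_nonneg hk, xyPow_of_nonneg (by omega), show (k + 1).toNat = k.toNat + 1 by omega,
    pow_succ']

theorem gX_mul_xyPow_of_neg {k : ℤ} (hk : k < 0) :
    gX a * xyPow a k = gp a (ih a) * xyPow a (k + 1) := by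
  rw [xyPow_of_nonpos hk.le, xyPow_of_nonpos (by omega),
    show (-k).toNat = (-(k + 1)).toNat + 1 by omega, pow_succ', ← mul_assoc, gX_mul_gY]

theorem gY_mul_xyPow_of_nonpos {k : ℤ} (hk : k ≤ 0) : gY a * xyPow a k = xyPow a (k - 1) := by
  rw [xyPow_of_nonpos hk, xyPow_of_nonpos (by omega),
    show (-(k - 1)).toNat = (-k).toNat + 1 by omega, pow_succ']

theorem gY_mul_xyPow_of_pos {k : ℤ} (hk : 0 < k) :
    gY a * xyPow a k = gp a (ih a) * xyPow a (k - 1) := by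
  rw [xyPow_of_nonneg hk.le, xyPow_of_nonneg (by omega),
    show k.toNat = (k - 1).toNat + 1 by omega, pow_succ', ← mul_assoc, mul_comm (gY a), gX_mul_gY]

theorem gHp_mul_mem_W (n : ℤ) {k : ℤ} {w : GW a} (hw : w ∈ W a k) :
    gHp a n * w ∈ W a k := by
  refine Submodule.mul_mem_of_forall_mem_span _ ?_ hw
  rintro _ ⟨m, rfl⟩
  rw [← mul_assoc, ← gHp_add]
  exact gHp_mul_xyPow_mem_W _ _

theorem gp_ih_mul_mem_W (l : L) {k : ℤ} {w : GW a} (hw : w ∈ W a k) :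
    gp a (ih l) * w ∈ W a k := by
  induction l using LaurentPolynomial.induction_on' with
  | add p q hp hq =>
    rw [map_add, map_add, add_mul]
    exact add_mem hp hq
  | C_mul_T n c =>
    rw [map_mul, map_mul, mul_assoc, gp_ih_C_mul]
    exact Submodule.smul_mem _ c (gHp_mul_mem_W n hw)

theorem gX_mul_mem_W {k : ℤ} {w : GW a} (hw : w ∈ W a k) : gX a * w ∈ W a (k + 1) := by
  refine Submodule.mul_mem_of_forall_mem_span _ ?_ hw
  rintro _ ⟨m, rfl⟩
  change gX a * (gHp a m * xyPow a k) ∈ _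
  rw [mul_left_comm (gX a)]
  rcases le_or_gt 0 k with hk | hk
  · rw [gX_mul_xyPow_of_nonneg hk]
    exact gHp_mul_xyPow_mem_W m _
  · rw [gX_mul_xyPow_of_neg hk, mul_left_comm (gHp a m)]
    exact gp_ih_mul_mem_W a (gHp_mul_xyPow_mem_W m _)

theorem gY_mul_mem_W {k : ℤ} {w : GW a} (hw : w ∈ W a k) : gY a * w ∈ W a (k - 1) := by
  refine Submodule.mul_mem_of_forall_mem_span _ ?_ hw
  rintro _ ⟨m, rfl⟩
  change gY a * (gHp a m * xyPow a k) ∈ _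
  rw [mul_left_comm (gY a)]
  rcases le_or_gt k 0 with hk | hk
  · rw [gY_mul_xyPow_of_nonpos hk]
    exact gHp_mul_xyPow_mem_W m _
  · rw [gY_mul_xyPow_of_pos hk, mul_left_comm (gHp a m)]
    exact gp_ih_mul_mem_W a (gHp_mul_xyPow_mem_W m _)

theorem mul_mem_iSup_W {c : GW a} (hc : ∀ k, ∀ w ∈ W a k, ∃ k', c * w ∈ W a k') {w : GW a}
    (hw : w ∈ ⨆ k, W a k) : c * w ∈ ⨆ k, W a k := by
  suffices ⨆ k, W a k ≤ (⨆ k, W a k).comap (LinearMap.mulLeft ℂ c) from this hw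
  refine iSup_le fun k u hu => ?_
  obtain ⟨k', hk'⟩ := hc k u hu
  exact Submodule.mem_iSup_of_mem k' hk'

theorem mem_iSup_W (w : GW a) : w ∈ ⨆ k, W a k := by
  obtain ⟨b, rfl⟩ := Ideal.Quotient.mk_surjective w
  induction b using MvPolynomial.induction_on with
  | C l =>
    change gp a (ih l) ∈ _
    have h1 : (1 : GW a) ∈ W a 0 := by
      simpa [gHp_zero, xyPow] using gHp_mul_xyPow_mem_W (a := a) 0 0
    simpa using Submodule.mem_iSup_of_mem 0 (gp_ih_mul_mem_W l h1)
  | add p q hp hq =>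
    rw [map_add]
    exact add_mem hp hq
  | mul_X p i hp =>
    rw [map_mul, mul_comm (Ideal.Quotient.mk _ p)]
    fin_cases i
    · exact mul_mem_iSup_W (fun k w hw => ⟨k + 1, gX_mul_mem_W hw⟩) hp
    · exact mul_mem_iSup_W (fun k w hw => ⟨k - 1, gY_mul_mem_W hw⟩) hp

end GW

namespace IsGWBracket

variable {a : L} {β : GW a → GW a → GW a} (hβ : IsGWBracket a β)
include hβ

/- The `(A := GW a)` below is needed because `GW a` carries the quotient-module structure over
`ℂ`, which agrees with `Algebra.toModule` only once the instances have been synthesized. -/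

/-- The map `f(u) = {u,h}h⁻¹` of the statement. -/
def degreeDerivation : Derivation ℂ (GW a) (GW a) :=
  gHp a (-1) • hβ.1.derivationLeft (gH a)

theorem degreeDerivation_apply (u : GW a) :
    hβ.degreeDerivation u = gHp a (-1) * β u (gH a) := rfl

theorem degreeDerivation_gH : hβ.degreeDerivation (gH a) = 0 := by
  rw [degreeDerivation_apply, hβ.1.apply_self, mul_zero]

theorem degreeDerivation_gHp (m : ℤ) : hβ.degreeDerivation (gHp a m) = 0 := by
  have hinv : hβ.degreeDerivation (gHp a (-1)) = 0 := by
    rw [Derivation.leibniz_of_mul_eq_one (b := gH a) _ GW.gHp_neg_one_mul_gH,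
      hβ.degreeDerivation_gH, smul_zero]
  induction m using Int.induction_on with
  | zero => rw [GW.gHp_zero, Derivation.map_one_eq_zero]
  | succ n ih =>
    rw [GW.gHp_add, GW.gHp_one]
    exact Derivation.apply_mul_of_eq_zero (A := GW a) _ ih hβ.degreeDerivation_gH
  | pred n ih =>
    rw [sub_eq_add_neg, GW.gHp_add]
    exact Derivation.apply_mul_of_eq_zero (A := GW a) _ ih hinv

theorem degreeDerivation_gX : hβ.degreeDerivation (gX a) = (1 : ℂ) • gX a := by
  rw [one_smul, degreeDerivation_apply, hβ.2.1, ← mul_assoc, GW.gHp_neg_one_mul_gH, one_mul]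

theorem degreeDerivation_gY : hβ.degreeDerivation (gY a) = (-1 : ℂ) • gY a := by
  rw [neg_one_smul, degreeDerivation_apply, hβ.2.2.1, mul_neg (gHp a (-1)), ← mul_assoc,
    GW.gHp_neg_one_mul_gH, one_mul]

theorem degreeDerivation_xyPow (k : ℤ) :
    hβ.degreeDerivation (GW.xyPow a k) = (k : ℂ) • GW.xyPow a k := by
  rcases le_or_gt 0 k with hk | hk
  · rw [GW.xyPow_of_nonneg hk,
      Derivation.apply_pow_of_eq_smul (A := GW a) _ hβ.degreeDerivation_gX, mul_one,
      show ((k.toNat : ℕ) : ℂ) = k by exact_mod_cast Int.toNat_of_nonneg hk]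
  · rw [GW.xyPow_of_nonpos hk.le,
      Derivation.apply_pow_of_eq_smul (A := GW a) _ hβ.degreeDerivation_gY, mul_neg_one,
      show (((-k).toNat : ℕ) : ℂ) = -k by
        exact_mod_cast Int.toNat_of_nonneg (neg_nonneg.mpr hk.le), neg_neg]

theorem W_le_eigenspace (k : ℤ) :
    W a k ≤ Module.End.eigenspace (hβ.degreeDerivation : Module.End ℂ (GW a)) k := by
  refine Submodule.span_le.mpr ?_
  rintro _ ⟨m, rfl⟩
  refine Module.End.mem_eigenspace_iff.mpr ?_
  change hβ.degreeDerivation (gHp a m * GW.xyPow a k) = (k : ℂ) • (gHp a m * GW.xyPow a k)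
  rw [hβ.degreeDerivation.leibniz, hβ.degreeDerivation_gHp, hβ.degreeDerivation_xyPow, smul_zero,
    add_zero, smul_eq_mul, mul_smul_comm]

end IsGWBracket

theorem GW_prime_poisson_ideal_homogeneous_general (a : L)
    (β : GW a → GW a → GW a) (hβ : IsGWBracket a β)
    (P : Ideal (GW a))
    (hf : ∀ p ∈ P, β p (gH a) * gHp a (-1) ∈ P)
    (hne : P ≠ ⊥) :
    ∃ k : ℤ, ∃ w ∈ W a k, w ≠ 0 ∧ w ∈ P := by
  obtain ⟨p, hpP, hp0⟩ := Submodule.exists_mem_ne_zero_of_ne_bot hne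
  have hP : ∀ u ∈ P.restrictScalars ℂ, hβ.degreeDerivation u ∈ P.restrictScalars ℂ := by
    intro u hu
    rw [Submodule.restrictScalars_mem, hβ.degreeDerivation_apply, mul_comm (gHp a (-1))]
    exact hf u hu
  exact Module.End.exists_ne_zero_mem_of_mem_iSup hP Int.cast_injective hβ.W_le_eigenspace
    hpP hp0 (GW.mem_iSup_W p)

/-- For a prime Poisson ideal `P` of `A₁` that is stable under the
map `f(w) = {w,h}h⁻¹`, if `P` is nonzero then `P` contains a nonzero homogeneous
element `w_k ∈ W_k` for some `k ∈ ℤ`. -/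
theorem GW_prime_poisson_ideal_homogeneous (a : L) (ha : a ≠ 0)
    (β : GW a → GW a → GW a) (hβ : IsGWBracket a β)
    (P : Ideal (GW a)) (hprime : P.IsPrime)
    (hpoisson : ∀ p ∈ P, ∀ r : GW a, β p r ∈ P)
    (hf : ∀ p ∈ P, β p (gH a) * gHp a (-1) ∈ P)
    (hne : P ≠ ⊥) :
    ∃ k : ℤ, ∃ w ∈ W a k, w ≠ 0 ∧ w ∈ P :=
  GW_prime_poisson_ideal_homogeneous_general a β hβ P hf hne
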